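/- Let A be a graded algebra equipped with an operator d: A_n → A_{n+1} such that d∘d = 0 and d is a derivation of the product. Then A equipped with the derived bracket [a,b]_d := (−1)^{|a|+1}[da, b], where [x,y] = xy − (−1)^{|x||y|}yx is the graded commutator, is a generalized Loday-Gerstenhaber algebra: the bracket [−,−]_d has degree 1, satisfies the graded Leibniz (Jacobi) identity [a,[b,c]_d]_d = [[a,b]_d,c]_d + (−1)^{(|a|+1)(|b|+1)}[b,[a,c]_d]_d, and satisfies the Poisson relation [a,bc]_d = [a,b]_d c + (−1)^{(|a|+1)|b|} b[a,c]_d. -/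

import Mathlib

/-!
The derived bracket is `[a, b]_d = ±[d a, b]`, so everything reduces to the graded commutator
`[x, y] = x y - (-1)^{|x||y|} y x`. The map `[x, -]` is a graded derivation of the product, which
is the Poisson relation, and applying this to both products in `[y, z]` gives the graded Jacobi
identity for the commutator. Since `d` is a derivation of
the product it is also one of the commutator, so `d [d a, b] = ±[d a, d b]` by `d ∘ d = 0`, and
the Leibniz identity of the derived bracket is the commutator Jacobi identity for `d a, d b, c`.
-/

def sgn (n : ℤ) : ℤ := (Int.negOnePow n : ℤˣ)

variable {k : Type*} [CommRing k] {A : Type*} [Ring A] [Algebra k A]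

/-- The derived bracket `[a,b]_d = (-1)^{|a|+1} [d a, b]`, for `a` of degree
`i` and `b` of degree `j`, where `[x,y] = xy - (-1)^{|x||y|} yx` is the graded
commutator (here `d a` has degree `i + 1`). -/
def derivedBracket (d : A →ₗ[k] A) (i j : ℤ) (a b : A) : A :=
  sgn (i + 1) • (d a * b - sgn ((i + 1) * j) • (b * d a))

lemma sgn_add (m n : ℤ) : sgn (m + n) = sgn m * sgn n := by
  simp [sgn, Int.negOnePow_add]

lemma sgn_mul_self (n : ℤ) : sgn n * sgn n = 1 := by
  rw [sgn, ← Units.val_mul, Int.units_mul_self, Units.val_one]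

def gradedComm (p q : ℤ) (x y : A) : A := x * y - sgn (p * q) • (y * x)

lemma gradedComm_mul_right (p q r : ℤ) (x y z : A) :
    gradedComm p (q + r) x (y * z) =
      gradedComm p q x y * z + sgn (p * q) • (y * gradedComm p r x z) := by
  simp only [gradedComm, mul_add, sgn_add, mul_sub, sub_mul, mul_smul_comm, smul_mul_assoc,
    smul_sub, smul_smul, mul_assoc]
  abel

lemma gradedComm_jacobi (p q r : ℤ) (x y z : A) :
    gradedComm p (q + r) x (gradedComm q r y z) =
      gradedComm (p + q) r (gradedComm p q x y) z +
        sgn (p * q) • gradedComm q (p + r) y (gradedComm p r x z) := by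
  have h_expand : gradedComm p (q + r) x (gradedComm q r y z) =
      gradedComm p (q + r) x (y * z) - sgn (q * r) • gradedComm p (r + q) x (z * y) := by
    simp only [gradedComm, add_comm r q, mul_sub, sub_mul, mul_smul_comm, smul_mul_assoc, mul_assoc]
    module
  rw [h_expand, gradedComm_mul_right, gradedComm_mul_right]
  generalize gradedComm p q x y = X
  generalize gradedComm p r x z = Y
  simp only [gradedComm, mul_add, add_mul, sgn_add, mul_comm q p]
  -- the one coefficient that does not match termwise is `(-1)^{pq} (-1)^{qp} = 1`
  linear_combination (norm := module) (sgn_mul_self (p * q)) • (sgn (q * r) • (Y * y))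

lemma gradedComm_smul_left (p q : ℤ) (c : ℤ) (x y : A) :
    gradedComm p q (c • x) y = c • gradedComm p q x y := by
  simp only [gradedComm, smul_sub, smul_mul_assoc, mul_smul_comm, smul_comm c]

lemma gradedComm_smul_right (p q : ℤ) (c : ℤ) (x y : A) :
    gradedComm p q x (c • y) = c • gradedComm p q x y := by
  simp only [gradedComm, smul_sub, smul_mul_assoc, mul_smul_comm, smul_comm c]

lemma gradedComm_mem {σ : Type*} [SetLike σ A] [AddSubgroupClass σ A] {𝒜 : ℤ → σ}
    [SetLike.GradedMonoid 𝒜] {p q : ℤ} {x y : A} (hx : x ∈ 𝒜 p) (hy : y ∈ 𝒜 q) :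
    gradedComm p q x y ∈ 𝒜 (p + q) :=
  sub_mem (SetLike.mul_mem_graded hx hy)
    (zsmul_mem (add_comm q p ▸ SetLike.mul_mem_graded hy hx) _)

def IsGradedDerivation (𝒜 : ℤ → Submodule k A) (d : A →ₗ[k] A) : Prop :=
  ∀ ⦃i : ℤ⦄ ⦃a : A⦄ (b : A), a ∈ 𝒜 i → d (a * b) = d a * b + sgn i • (a * d b)

lemma IsGradedDerivation.map_gradedComm {𝒜 : ℤ → Submodule k A} {d : A →ₗ[k] A}
    (hd : IsGradedDerivation 𝒜 d) {p q : ℤ} {x y : A} (hx : x ∈ 𝒜 p) (hy : y ∈ 𝒜 q) :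
    d (gradedComm p q x y) =
      gradedComm (p + 1) q (d x) y + sgn p • gradedComm p (q + 1) x (d y) := by
  simp only [gradedComm, map_sub, map_zsmul, hd _ hx, hd _ hy, add_mul, mul_add, sgn_add,
    one_mul, mul_one, smul_add, smul_sub, smul_smul]
  linear_combination (norm := module) (sgn_mul_self p) • (sgn (p * q) • (d y * x))

section DerivedBracket

variable {𝒜 : ℤ → Submodule k A} {d : A →ₗ[k] A}

lemma derivedBracket_eq_smul_gradedComm (i j : ℤ) (a b : A) :
    derivedBracket d i j a b = sgn (i + 1) • gradedComm (i + 1) j (d a) b :=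
  rfl

lemma derivedBracket_mem [SetLike.GradedMonoid 𝒜]
    (hd_mem : ∀ ⦃i : ℤ⦄ ⦃a : A⦄, a ∈ 𝒜 i → d a ∈ 𝒜 (i + 1))
    {i j : ℤ} {a b : A} (ha : a ∈ 𝒜 i) (hb : b ∈ 𝒜 j) :
    derivedBracket d i j a b ∈ 𝒜 (i + j + 1) :=
  zsmul_mem (add_right_comm i 1 j ▸ gradedComm_mem (hd_mem ha) hb) _

lemma derivedBracket_mul_right (i j l : ℤ) (a b c : A) :
    derivedBracket d i (j + l) a (b * c) =
      derivedBracket d i j a b * c + sgn ((i + 1) * j) • (b * derivedBracket d i l a c) := by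
  simp only [derivedBracket_eq_smul_gradedComm, gradedComm_mul_right, smul_add, smul_mul_assoc,
    mul_smul_comm, smul_comm (sgn (i + 1))]

lemma derivedBracket_derivedBracket
    (hd_mem : ∀ ⦃i : ℤ⦄ ⦃a : A⦄, a ∈ 𝒜 i → d a ∈ 𝒜 (i + 1))
    (hdd : d ∘ₗ d = 0) (hd : IsGradedDerivation 𝒜 d) {i j : ℤ} (l : ℤ) {a b : A} (c : A)
    (ha : a ∈ 𝒜 i) (hb : b ∈ 𝒜 j) :
    derivedBracket d i (j + l + 1) a (derivedBracket d j l b c) =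
      derivedBracket d (i + j + 1) l (derivedBracket d i j a b) c +
        sgn ((i + 1) * (j + 1)) •
          derivedBracket d j (i + l + 1) b (derivedBracket d i l a c) := by
  have hd_comm : d (gradedComm (i + 1) j (d a) b) =
      sgn (i + 1) • gradedComm (i + 1) (j + 1) (d a) (d b) := by
    rw [hd.map_gradedComm (hd_mem ha) hb, show d (d a) = 0 from LinearMap.congr_fun hdd a]
    simp [gradedComm]
  have hJ := gradedComm_jacobi (i + 1) (j + 1) l (d a) (d b) c
  rw [show j + 1 + l = j + l + 1 by ring, show i + 1 + (j + 1) = i + j + 1 + 1 by ring,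
    show i + 1 + l = i + l + 1 by ring] at hJ
  simp only [derivedBracket_eq_smul_gradedComm, map_zsmul, hd_comm, gradedComm_smul_left,
    gradedComm_smul_right, hJ, smul_add, smul_smul]
  rw [sgn_mul_self, mul_one, ← sgn_add, show i + 1 + (j + 1) = i + j + 1 + 1 by ring]
  module

end DerivedBracket

/-- **Statement 17.** If `d` is a square-zero degree `+1` derivation of a
`ℤ`-graded algebra `A`, then the derived bracket `[a,b]_d = (-1)^{|a|+1}[da,b]`
makes `A` a generalized Loday-Gerstenhaber algebra: the bracket raises total
degree by `1`, satisfies the graded Leibniz/Jacobi identity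
`[a,[b,c]_d]_d = [[a,b]_d,c]_d + (-1)^{(|a|+1)(|b|+1)} [b,[a,c]_d]_d`
and the Poisson relation
`[a,bc]_d = [a,b]_d c + (-1)^{(|a|+1)|b|} b [a,c]_d`. -/
theorem statement17
    (𝒜 : ℤ → Submodule k A) [GradedRing 𝒜]
    (d : A →ₗ[k] A)
    (hd_mem : ∀ ⦃i : ℤ⦄ ⦃a : A⦄, a ∈ 𝒜 i → d a ∈ 𝒜 (i + 1))
    (hdd : d ∘ₗ d = 0)
    (hLeibniz : ∀ ⦃i : ℤ⦄ ⦃a : A⦄ (b : A), a ∈ 𝒜 i →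
      d (a * b) = d a * b + sgn i • (a * d b)) :
    -- degree 1:
    (∀ ⦃i j : ℤ⦄ ⦃a b : A⦄, a ∈ 𝒜 i → b ∈ 𝒜 j →
        derivedBracket d i j a b ∈ 𝒜 (i + j + 1)) ∧
    -- graded Leibniz (Jacobi) identity:
    (∀ ⦃i j l : ℤ⦄ ⦃a b c : A⦄, a ∈ 𝒜 i → b ∈ 𝒜 j → c ∈ 𝒜 l →
        derivedBracket d i (j + l + 1) a (derivedBracket d j l b c) =
          derivedBracket d (i + j + 1) l (derivedBracket d i j a b) c +
            sgn ((i + 1) * (j + 1)) •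
              derivedBracket d j (i + l + 1) b (derivedBracket d i l a c)) ∧
    -- Poisson relation:
    (∀ ⦃i j l : ℤ⦄ ⦃a b c : A⦄, a ∈ 𝒜 i → b ∈ 𝒜 j → c ∈ 𝒜 l →
        derivedBracket d i (j + l) a (b * c) =
          derivedBracket d i j a b * c +
            sgn ((i + 1) * j) • (b * derivedBracket d i l a c)) := by
  exact ⟨fun _ _ _ _ ha hb => derivedBracket_mem hd_mem ha hb,
    fun _ _ l _ _ c ha hb _ => derivedBracket_derivedBracket hd_mem hdd hLeibniz l c ha hb,
    fun i j l a b c _ _ _ => derivedBracket_mul_right i j l a b c⟩
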